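/- If X is a closed permutation class such that for every k ≥ 1 there is an up-indecomposable permutation σ of length k with the k-fold direct sum σ ⊕ σ ⊕ ... ⊕ σ (k summands) belonging to X, then |X ∩ S_n| ≥ 2^{n-1} for every n ≥ 1. The analogous statement holds with down-indecomposable permutations and the skew sum ⊖. -/

import Mathlib

/-- A finite permutation: a length `n` together with a permutation of `{1,…,n}`
(modelled as `Fin n`). -/
def PermSeq : Type := Σ n : ℕ, Equiv.Perm (Fin n)

/-- `PermContains π ρ` : the permutation `π` is contained in `ρ` (written `π ≺ ρ`),
i.e. `ρ`, viewed as a sequence, has a subsequence order-isomorphic to `π`. -/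
def PermContains {m n : ℕ} (π : Equiv.Perm (Fin m)) (ρ : Equiv.Perm (Fin n)) : Prop :=
  ∃ f : Fin m → Fin n, StrictMono f ∧ ∀ i j : Fin m, π i < π j ↔ ρ (f i) < ρ (f j)

/-- Containment as a relation on `PermSeq`. -/
def PermLE (σ τ : PermSeq) : Prop := PermContains σ.2 τ.2

/-- A closed permutation class: downward closed under containment. -/
def IsCPC (X : Set PermSeq) : Prop := ∀ σ ∈ X, ∀ π : PermSeq, PermLE π σ → π ∈ X

/-- `countIn X n = |X ∩ S_n|`. -/
noncomputable def countIn (X : Set PermSeq) (n : ℕ) : ℕ := {π ∈ X | π.1 = n}.ncard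

/-- The direct sum `σ ⊕ τ` of permutations: `(σ⊕τ)(i) = σ(i)` for `i` in the first block
and `(σ⊕τ)(m+i) = m + τ(i)` on the second block. -/
def permOplus {m n : ℕ} (σ : Equiv.Perm (Fin m)) (τ : Equiv.Perm (Fin n)) :
    Equiv.Perm (Fin (m + n)) :=
  finSumFinEquiv.symm.trans ((Equiv.sumCongr σ τ).trans finSumFinEquiv)

/-- The skew sum `σ ⊖ τ` of permutations: `(σ⊖τ)(i) = n + σ(i)` for `i` in the first block
and `(σ⊖τ)(m+i) = τ(i)` on the second block. -/
def permOminus {m n : ℕ} (σ : Equiv.Perm (Fin m)) (τ : Equiv.Perm (Fin n)) :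
    Equiv.Perm (Fin (m + n)) :=
  finSumFinEquiv.symm.trans ((Equiv.sumCongr σ τ).trans
    ((Equiv.sumComm (Fin m) (Fin n)).trans (finSumFinEquiv.trans (finCongr (Nat.add_comm n m)))))

/-- Direct sum on `PermSeq`. -/
def PermSeq.oplus (σ τ : PermSeq) : PermSeq := ⟨σ.1 + τ.1, permOplus σ.2 τ.2⟩

/-- Skew sum on `PermSeq`. -/
def PermSeq.ominus (σ τ : PermSeq) : PermSeq := ⟨σ.1 + τ.1, permOminus σ.2 τ.2⟩

/-- A permutation is up-indecomposable if it is not the direct sum of two nonempty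
permutations. -/
def UpIndec (π : PermSeq) : Prop :=
  ¬ ∃ σ τ : PermSeq, 1 ≤ σ.1 ∧ 1 ≤ τ.1 ∧ π = PermSeq.oplus σ τ

/-- A permutation is down-indecomposable if it is not the skew sum of two nonempty
permutations. -/
def DownIndec (π : PermSeq) : Prop :=
  ¬ ∃ σ τ : PermSeq, 1 ≤ σ.1 ∧ 1 ≤ τ.1 ∧ π = PermSeq.ominus σ τ

/-- The `k`-fold direct sum `σ ⊕ σ ⊕ ⋯ ⊕ σ` (`k` summands). -/
def nfoldOplus : ℕ → PermSeq → PermSeq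
  | 0, _ => ⟨0, 1⟩
  | k + 1, σ => PermSeq.oplus (nfoldOplus k σ) σ

/-- The `k`-fold skew sum `σ ⊖ σ ⊖ ⋯ ⊖ σ` (`k` summands). -/
def nfoldOminus : ℕ → PermSeq → PermSeq
  | 0, _ => ⟨0, 1⟩
  | k + 1, σ => PermSeq.ominus (nfoldOminus k σ) σ


/-!
Call `c` with `0 < c < k` a cut of `σ ∈ S_k` if every value at the first `c` positions is below
every value at the others; up-indecomposable means cut-free. Deleting either the maximum or the
last entry of a cut-free permutation leaves a cut-free pattern, so an up-indecomposable `σ ∈ S_n`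
contains cut-free patterns `τ_m` of every length `m ≤ n`. For a composition `(a_1, …, a_r)` of
`n`, the sum `τ_{a_1} ⊕ ⋯ ⊕ τ_{a_r}` lies below `σ^{⊕n}`, hence in `X`; a sum of nonempty
cut-free blocks determines its last block, so distinct compositions give distinct permutations,
and there are `2^(n-1)` compositions. Complementing values exchanges `⊕` and `⊖`, which gives
the skew case.
-/

open Equiv Function

section Cuts

variable {α : Type*}

def IsCut [LT α] {k : ℕ} (v : Fin k → α) (c : ℕ) : Prop :=
  ∀ i j : Fin k, i.val < c → c ≤ j.val → v i < v j

def CutFree [LT α] {k : ℕ} (v : Fin k → α) : Prop :=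
  ∀ c, 0 < c → c < k → ¬ IsCut v c

theorem CutFree.of_lt_iff_lt [LT α] {β : Type*} [LT β] {k : ℕ} {v : Fin k → α} {w : Fin k → β}
    (hw : CutFree w) (h : ∀ i j, v i < v j ↔ w i < w j) : CutFree v :=
  fun c hc₀ hck hcut => hw c hc₀ hck fun i j hi hj => (h i j).1 (hcut i j hi hj)

theorem Fin.exists_succAbove_eq_and_val {K : ℕ} {p i : Fin (K + 1)} (h : i ≠ p) :
    ∃ i' : Fin K, p.succAbove i' = i ∧
      (i'.val = i.val ∧ i.val < p.val ∨ i'.val + 1 = i.val ∧ p.val < i.val) := by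
  obtain ⟨i', rfl⟩ := Fin.exists_succAbove_eq h
  refine ⟨i', rfl, ?_⟩
  rcases lt_or_ge (Fin.castSucc i') p with hlt | hle
  · rw [Fin.succAbove_of_castSucc_lt _ _ hlt]
    exact Or.inl ⟨rfl, hlt⟩
  · rw [Fin.succAbove_of_le_castSucc _ _ hle]
    exact Or.inr ⟨rfl, Fin.lt_def.1 (hle.trans_lt (Fin.castSucc_lt_succ))⟩

variable [LinearOrder α] {K : ℕ} {v : Fin (K + 1) → α} {p : Fin (K + 1)}

theorem IsCut.of_comp_succAbove_of_le_max (hmax : ∀ i ≠ p, v i < v p) {c : ℕ}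
    (hcp : c ≤ p.val) (h : IsCut (v ∘ p.succAbove) c) : IsCut v c := by
  intro i j hi hj
  have hip : i ≠ p := by rintro rfl; omega
  by_cases hjp : j = p
  · subst hjp
    exact hmax i hip
  obtain ⟨i', rfl, hi'⟩ := Fin.exists_succAbove_eq_and_val hip
  obtain ⟨j', rfl, hj'⟩ := Fin.exists_succAbove_eq_and_val hjp
  exact h i' j' (by omega) (by omega)

theorem CutFree.exists_cutFree_comp_succAbove (hinj : Injective v) (hv : CutFree v) :
    ∃ q : Fin (K + 1), CutFree (v ∘ q.succAbove) := by
  obtain ⟨p, hp⟩ := Finite.exists_max v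
  have hmax : ∀ i ≠ p, v i < v p := fun i hi => (hp i).lt_of_ne (hinj.ne hi)
  -- Delete the maximum or the last entry. A cut `c'` left by the former lies right of `p`, a cut
  -- `c` left by the latter lies left of `p`; then `c` is a cut of `v`, as `c'` puts the last
  -- entry above everything before `c`.
  by_contra! hq
  obtain ⟨c', hc'₀, hc'K, hcut'⟩ : ∃ c', 0 < c' ∧ c' < K ∧ IsCut (v ∘ p.succAbove) c' := by
    simpa [CutFree] using hq p
  obtain ⟨c, hc₀, hcK, hcut⟩ : ∃ c, 0 < c ∧ c < K ∧ IsCut (v ∘ Fin.castSucc) c := by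
    simpa [CutFree] using hq (Fin.last K)
  have hpc' : p.val < c' := by
    by_contra! hle
    exact hv c' hc'₀ (by omega) (hcut'.of_comp_succAbove_of_le_max hmax hle)
  have hcp : c ≤ p.val := by
    by_contra! hlt
    exact (hp (Fin.castSucc ⟨c, hcK⟩)).not_gt (hcut ⟨p, by omega⟩ ⟨c, hcK⟩ hlt le_rfl)
  refine hv c hc₀ (by omega) fun i j hi hj => ?_
  by_cases hjK : j.val < K
  · exact hcut ⟨i, by omega⟩ ⟨j, hjK⟩ hi hj
  have hip : i ≠ p := by rintro rfl; omega
  by_cases hjp : j = p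
  · subst hjp
    exact hmax i hip
  obtain ⟨i', rfl, hi'⟩ := Fin.exists_succAbove_eq_and_val hip
  obtain ⟨j', rfl, hj'⟩ := Fin.exists_succAbove_eq_and_val hjp
  exact hcut' i' j' (by omega) (by omega)

theorem exists_perm_lt_iff_lt {m : ℕ} (w : Fin m → α) (hw : Injective w) :
    ∃ τ : Perm (Fin m), ∀ i j, τ i < τ j ↔ w i < w j := by
  have hmono : StrictMono (w ∘ Tuple.sort w) :=
    (Tuple.monotone_sort w).strictMono_of_injective (hw.comp (Tuple.sort w).injective)
  refine ⟨(Tuple.sort w).symm, fun i j => ?_⟩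
  rw [← hmono.lt_iff_lt]
  simp

end Cuts

theorem PermContains.refl {k : ℕ} (σ : Perm (Fin k)) : PermContains σ σ :=
  ⟨id, strictMono_id, fun _ _ => Iff.rfl⟩

theorem PermContains.trans {a b c : ℕ} {σ : Perm (Fin a)} {τ : Perm (Fin b)}
    {ρ : Perm (Fin c)} (h₁ : PermContains σ τ) (h₂ : PermContains τ ρ) : PermContains σ ρ := by
  obtain ⟨f, hf, hσf⟩ := h₁
  obtain ⟨g, hg, hτg⟩ := h₂
  exact ⟨g ∘ f, hg.comp hf, fun i j => (hσf i j).trans (hτg (f i) (f j))⟩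

theorem CutFree.exists_cutFree_permContains {k : ℕ} {σ : Perm (Fin k)} (hσ : CutFree σ)
    {m : ℕ} (hm : m ≤ k) : ∃ τ : Perm (Fin m), CutFree τ ∧ PermContains τ σ := by
  induction k with
  | zero =>
    obtain rfl := Nat.le_zero.1 hm
    exact ⟨σ, hσ, .refl σ⟩
  | succ K ih =>
    rcases hm.eq_or_lt with rfl | hlt
    · exact ⟨σ, hσ, .refl σ⟩
    obtain ⟨q, hq⟩ := hσ.exists_cutFree_comp_succAbove σ.injective
    obtain ⟨τ₀, hτ₀⟩ := exists_perm_lt_iff_lt _ (σ.injective.comp Fin.succAbove_right_injective)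
    obtain ⟨τ, hτ, hττ₀⟩ := ih (hq.of_lt_iff_lt hτ₀) (Nat.lt_succ_iff.1 hlt)
    exact ⟨τ, hτ, hττ₀.trans ⟨q.succAbove, Fin.strictMono_succAbove q, hτ₀⟩⟩

section Sums

variable {m n : ℕ}

@[simp]
theorem Fin.castAdd_lt_castAdd_iff {i j : Fin m} : Fin.castAdd n i < Fin.castAdd n j ↔ i < j :=
  Iff.rfl

@[simp]
theorem Fin.castAdd_lt_natAdd (i : Fin m) (j : Fin n) : Fin.castAdd n i < Fin.natAdd m j :=
  Fin.lt_def.2 (Nat.lt_add_right _ i.isLt)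

@[simp]
theorem Fin.not_natAdd_lt_castAdd (i : Fin m) (j : Fin n) : ¬Fin.natAdd m j < Fin.castAdd n i :=
  (Fin.castAdd_lt_natAdd i j).asymm

@[simp]
theorem permOplus_castAdd (σ : Perm (Fin m)) (τ : Perm (Fin n)) (i : Fin m) :
    permOplus σ τ (Fin.castAdd n i) = Fin.castAdd n (σ i) := by
  simp [permOplus]

@[simp]
theorem permOplus_natAdd (σ : Perm (Fin m)) (τ : Perm (Fin n)) (i : Fin n) :
    permOplus σ τ (Fin.natAdd m i) = Fin.natAdd m (τ i) := by
  simp [permOplus]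

@[simp]
theorem val_permOminus_castAdd (σ : Perm (Fin m)) (τ : Perm (Fin n)) (i : Fin m) :
    (permOminus σ τ (Fin.castAdd n i)).val = n + (σ i).val := by
  simp [permOminus, add_comm]

@[simp]
theorem val_permOminus_natAdd (σ : Perm (Fin m)) (τ : Perm (Fin n)) (i : Fin n) :
    (permOminus σ τ (Fin.natAdd m i)).val = (τ i).val := by
  simp [permOminus]

theorem permOplus_inj {σ σ' : Perm (Fin m)} {τ τ' : Perm (Fin n)} :
    permOplus σ τ = permOplus σ' τ' ↔ σ = σ' ∧ τ = τ' := by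
  refine ⟨fun h => ⟨Equiv.ext fun i => ?_, Equiv.ext fun i => ?_⟩, fun h => h.1 ▸ h.2 ▸ rfl⟩
  · simpa using congr($h (Fin.castAdd n i))
  · simpa using congr($h (Fin.natAdd m i))

theorem isCut_permOplus (σ : Perm (Fin m)) (τ : Perm (Fin n)) : IsCut (permOplus σ τ) m := by
  intro i j hi hj
  obtain ⟨i, rfl⟩ : ∃ i' : Fin m, Fin.castAdd n i' = i := ⟨⟨i, hi⟩, rfl⟩
  obtain ⟨j, rfl⟩ : ∃ j' : Fin n, Fin.natAdd m j' = j :=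
    ⟨⟨j - m, by omega⟩, Fin.ext (Nat.add_sub_cancel' hj)⟩
  simp

theorem IsCut.of_permOplus {σ : Perm (Fin m)} {τ : Perm (Fin n)} {c : ℕ}
    (h : IsCut (permOplus σ τ) (m + c)) : IsCut τ c := fun i j hi hj => by
  simpa using h (Fin.natAdd m i) (Fin.natAdd m j) (by simpa) (by simpa)

theorem exists_eq_permOplus_of_isCut {c d : ℕ} {σ : Perm (Fin (c + d))} (h : IsCut σ c) :
    ∃ (σ₁ : Perm (Fin c)) (σ₂ : Perm (Fin d)), σ = permOplus σ₁ σ₂ := by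
  have hlow : ∀ i : Fin c, (σ (Fin.castAdd d i)).val < c := by
    intro i
    have := Finset.card_le_card_of_injOn (s := Finset.univ) (t := Finset.Ioi (σ (Fin.castAdd d i)))
      (σ ∘ Fin.natAdd c) (fun j _ => by simpa using h _ (Fin.natAdd c j) (by simp) (by simp))
      (σ.injective.comp (Fin.natAdd_injective d c)).injOn
    simp only [Finset.card_univ, Fintype.card_fin, Fin.card_Ioi] at this
    omega
  have hhigh : ∀ j : Fin d, c ≤ (σ (Fin.natAdd c j)).val := by
    intro j
    have := Finset.card_le_card_of_injOn (s := Finset.univ) (t := Finset.Iio (σ (Fin.natAdd c j)))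
      (σ ∘ Fin.castAdd d) (fun i _ => by simpa using h (Fin.castAdd d i) _ (by simp) (by simp))
      (σ.injective.comp (Fin.castAdd_injective c d)).injOn
    simpa using this
  let σ₁ : Perm (Fin c) := Equiv.ofBijective (fun i => ⟨σ (Fin.castAdd d i), hlow i⟩) <|
    Finite.injective_iff_bijective.1 fun i j hij =>
      Fin.castAdd_injective c d (σ.injective (Fin.ext (by simpa [Fin.ext_iff] using hij)))
  let σ₂ : Perm (Fin d) := Equiv.ofBijective
    (fun j => ⟨σ (Fin.natAdd c j) - c, by have := (σ (Fin.natAdd c j)).isLt; have := hhigh j; omega⟩) <|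
    Finite.injective_iff_bijective.1 fun i j hij => by
      have := hhigh i; have := hhigh j
      refine Fin.natAdd_injective d c (σ.injective (Fin.ext ?_))
      simp only [Fin.ext_iff] at hij
      omega
  refine ⟨σ₁, σ₂, Equiv.ext fun x => Fin.ext ?_⟩
  induction x using Fin.addCases with
  | left i => simp [σ₁]
  | right j =>
    have := hhigh j
    simp only [permOplus_natAdd, ofBijective_apply, Fin.natAdd_mk, σ₂]
    omega

theorem permOplus_mono {m' n' : ℕ} {σ : Perm (Fin m)} {σ' : Perm (Fin m')} {τ : Perm (Fin n)}
    {τ' : Perm (Fin n')} (hσ : PermContains σ σ') (hτ : PermContains τ τ') :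
    PermContains (permOplus σ τ) (permOplus σ' τ') := by
  obtain ⟨f, hf, hσf⟩ := hσ
  obtain ⟨g, hg, hτg⟩ := hτ
  let F : Fin (m + n) → Fin (m' + n') :=
    Fin.addCases (fun i => Fin.castAdd n' (f i)) (fun j => Fin.natAdd m' (g j))
  refine ⟨F, fun x y hxy => ?_, fun x y => ?_⟩
  · induction x using Fin.addCases <;> induction y using Fin.addCases <;>
      simp_all [F, hf.lt_iff_lt, hg.lt_iff_lt]
  · induction x using Fin.addCases <;> induction y using Fin.addCases <;> simp [F, hσf, hτg]

end Sums

theorem empty_permLE (π : PermSeq) : PermLE ⟨0, 1⟩ π :=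
  ⟨Fin.elim0, fun i => i.elim0, fun i => i.elim0⟩

theorem PermLE.oplus {a b c d : PermSeq} (hab : PermLE a b) (hcd : PermLE c d) :
    PermLE (a.oplus c) (b.oplus d) :=
  permOplus_mono hab hcd

theorem UpIndec.cutFree {π : PermSeq} (h : UpIndec π) : CutFree π.2 := by
  obtain ⟨k, σ⟩ := π
  intro c hc₀ (hck : c < k) hcut
  obtain ⟨d, rfl⟩ : ∃ d, k = c + d := ⟨k - c, by omega⟩
  obtain ⟨σ₁, σ₂, rfl⟩ := exists_eq_permOplus_of_isCut hcut
  exact h ⟨⟨c, σ₁⟩, ⟨d, σ₂⟩, hc₀, show 1 ≤ d by omega, rfl⟩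

namespace PermSeq

def oplusList : List PermSeq → PermSeq
  | [] => ⟨0, 1⟩
  | π :: l => (oplusList l).oplus π

theorem fst_oplusList (l : List PermSeq) : (oplusList l).1 = (l.map fun π => π.1).sum := by
  induction l with
  | nil => rfl
  | cons π l ih =>
    change (oplusList l).1 + π.1 = _
    rw [ih, List.map_cons, List.sum_cons, add_comm]

theorem oplusList_permLE_nfoldOplus {S : PermSeq} {r : ℕ} {l : List PermSeq}
    (hl : ∀ π ∈ l, PermLE π S) (hlen : l.length ≤ r) : PermLE (oplusList l) (nfoldOplus r S) := by
  induction r generalizing l with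
  | zero =>
    obtain rfl := List.length_eq_zero_iff.1 (Nat.le_zero.1 hlen)
    exact empty_permLE _
  | succ r ih =>
    cases l with
    | nil => exact empty_permLE _
    | cons π l =>
      exact (ih (fun τ hτ => hl τ (List.mem_cons_of_mem _ hτ))
        (Nat.le_of_succ_le_succ hlen)).oplus (hl π List.mem_cons_self)

theorem fst_le_of_oplus_eq {u v A B : PermSeq} (h : u.oplus A = v.oplus B) (hA : 0 < A.1)
    (hB : CutFree B.2) : B.1 ≤ A.1 := by
  have hlen : u.1 + A.1 = v.1 + B.1 := congrArg Sigma.fst h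
  by_contra! hlt
  have hcut : IsCut (v.oplus B).2 (v.1 + (u.1 - v.1)) := by
    rw [← h, Nat.add_sub_cancel' (by omega)]
    exact isCut_permOplus u.2 A.2
  exact hB (u.1 - v.1) (by omega) (by omega) hcut.of_permOplus

theorem oplus_inj_of_cutFree {u v A B : PermSeq} (h : u.oplus A = v.oplus B)
    (hA : 0 < A.1 ∧ CutFree A.2) (hB : 0 < B.1 ∧ CutFree B.2) : u = v ∧ A = B := by
  have hAB : A.1 = B.1 :=
    le_antisymm (fst_le_of_oplus_eq h.symm hB.1 hA.2) (fst_le_of_oplus_eq h hA.1 hB.2)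
  have hlen : u.1 + A.1 = v.1 + B.1 := congrArg Sigma.fst h
  have huv : u.1 = v.1 := by omega
  obtain ⟨m, σ⟩ := u; obtain ⟨m', σ'⟩ := v; obtain ⟨n, τ⟩ := A; obtain ⟨n', τ'⟩ := B
  obtain rfl : m = m' := huv
  obtain rfl : n = n' := hAB
  obtain ⟨rfl, rfl⟩ := permOplus_inj.1 (eq_of_heq (Sigma.mk.inj_iff.1 h).2)
  exact ⟨rfl, rfl⟩

theorem oplusList_inj_of_cutFree {l l' : List PermSeq} (hl : ∀ π ∈ l, 0 < π.1 ∧ CutFree π.2)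
    (hl' : ∀ π ∈ l', 0 < π.1 ∧ CutFree π.2) (h : oplusList l = oplusList l') : l = l' := by
  induction l generalizing l' with
  | nil =>
    cases l' with
    | nil => rfl
    | cons π' l' =>
      have : 0 = (oplusList l').1 + π'.1 := congrArg Sigma.fst h
      have := (hl' π' List.mem_cons_self).1
      omega
  | cons π l ih =>
    cases l' with
    | nil =>
      have : (oplusList l).1 + π.1 = 0 := congrArg Sigma.fst h
      have := (hl π List.mem_cons_self).1
      omega
    | cons π' l' =>
      obtain ⟨hll', rfl⟩ := oplus_inj_of_cutFree h (hl π List.mem_cons_self)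
        (hl' π' List.mem_cons_self)
      rw [ih (fun τ hτ => hl τ (List.mem_cons_of_mem _ hτ))
        (fun τ hτ => hl' τ (List.mem_cons_of_mem _ hτ)) hll']

theorem finite_setOf_fst_eq (n : ℕ) : {π : PermSeq | π.1 = n}.Finite := by
  refine (Set.finite_range fun σ : Perm (Fin n) => (⟨n, σ⟩ : PermSeq)).subset ?_
  rintro ⟨m, σ⟩ (rfl : m = n)
  exact ⟨σ, rfl⟩

end PermSeq

open PermSeq

theorem two_pow_le_countIn_of_upIndec {X : Set PermSeq} (hX : IsCPC X) {π : PermSeq}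
    (hπ : UpIndec π) (hπX : nfoldOplus π.1 π ∈ X) : 2 ^ (π.1 - 1) ≤ countIn X π.1 := by
  have hT : ∀ m, ∃ τ : PermSeq, τ.1 = m ∧ (m ≤ π.1 → CutFree τ.2 ∧ PermLE τ π) := by
    intro m
    by_cases hm : m ≤ π.1
    · obtain ⟨τ, hτ, hτπ⟩ := hπ.cutFree.exists_cutFree_permContains hm
      exact ⟨⟨m, τ⟩, rfl, fun _ => ⟨hτ, hτπ⟩⟩
    · exact ⟨⟨m, 1⟩, rfl, fun h => absurd h hm⟩
  choose T hTfst hT using hT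
  have hTblocks : ∀ c : Composition π.1, ∀ τ ∈ c.blocks.map T,
      0 < τ.1 ∧ CutFree τ.2 ∧ PermLE τ π := by
    simp only [List.mem_map, forall_exists_index, and_imp, forall_apply_eq_imp_iff₂]
    exact fun c a ha => ⟨(hTfst a).symm ▸ c.blocks_pos ha, hT a (c.blocks_le ha)⟩
  let F : Composition π.1 → PermSeq := fun c => oplusList (c.blocks.map T)
  have hF : ∀ c, F c ∈ {σ ∈ X | σ.1 = π.1} := fun c =>
    ⟨hX _ hπX _ (oplusList_permLE_nfoldOplus (fun τ hτ => (hTblocks c τ hτ).2.2)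
      (by simp [c.length_le])),
      by simp [F, fst_oplusList, Function.comp_def, hTfst, c.blocks_sum]⟩
  have hFinj : Injective F := fun c c' h =>
    Composition.ext <| List.map_injective_iff.2 (fun a b hab => by rw [← hTfst a, hab, hTfst]) <|
      oplusList_inj_of_cutFree (fun τ hτ => (hTblocks c τ hτ).imp_right And.left)
        (fun τ hτ => (hTblocks c' τ hτ).imp_right And.left) h
  calc 2 ^ (π.1 - 1) = (Set.univ : Set (Composition π.1)).ncard := by
        rw [Set.ncard_univ, Nat.card_eq_fintype_card, composition_card]
    _ ≤ countIn X π.1 := Set.ncard_le_ncard_of_injOn F (fun c _ => hF c) hFinj.injOn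
        ((finite_setOf_fst_eq _).subset fun _ h => h.2)

namespace PermSeq

def complement (π : PermSeq) : PermSeq := ⟨π.1, π.2.trans Fin.revPerm⟩

theorem complement_involutive : Involutive complement := by
  rintro ⟨n, σ⟩
  show (⟨n, (σ.trans Fin.revPerm).trans Fin.revPerm⟩ : PermSeq) = ⟨n, σ⟩
  congr 1
  ext i
  simp

theorem complement_oplus (a b : PermSeq) :
    (a.oplus b).complement = a.complement.ominus b.complement := by
  show (⟨a.1 + b.1, (permOplus a.2 b.2).trans Fin.revPerm⟩ : PermSeq) =
    ⟨a.1 + b.1, permOminus (a.2.trans Fin.revPerm) (b.2.trans Fin.revPerm)⟩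
  congr 1
  ext x
  induction x using Fin.addCases with
  | left i =>
    simp only [trans_apply, permOplus_castAdd, Fin.revPerm_apply, Fin.val_rev, Fin.val_castAdd,
      val_permOminus_castAdd]
    omega
  | right j =>
    simp only [trans_apply, permOplus_natAdd, Fin.revPerm_apply, Fin.val_rev, Fin.val_natAdd,
      val_permOminus_natAdd]
    omega

theorem complement_nfoldOplus (k : ℕ) (a : PermSeq) :
    (nfoldOplus k a).complement = nfoldOminus k a.complement := by
  induction k with
  | zero =>
    show (⟨0, (1 : Perm (Fin 0)).trans Fin.revPerm⟩ : PermSeq) = ⟨0, 1⟩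
    congr 1
    exact Subsingleton.elim _ _
  | succ k ih => rw [nfoldOplus, nfoldOminus, complement_oplus, ih]

end PermSeq

theorem PermLE.complement {a b : PermSeq} (h : PermLE a b) : PermLE a.complement b.complement := by
  obtain ⟨f, hf, hab⟩ := h
  refine ⟨f, hf, fun i j => ?_⟩
  show (a.2 i).rev < (a.2 j).rev ↔ (b.2 (f i)).rev < (b.2 (f j)).rev
  rw [Fin.rev_lt_rev, Fin.rev_lt_rev]
  exact hab j i

theorem DownIndec.upIndec_complement {π : PermSeq} (h : DownIndec π) : UpIndec π.complement := by
  rintro ⟨a, b, ha, hb, hab⟩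
  refine h ⟨a.complement, b.complement, ha, hb, ?_⟩
  rw [← complement_oplus, ← hab, complement_involutive]

theorem IsCPC.preimage_complement {X : Set PermSeq} (hX : IsCPC X) :
    IsCPC (complement ⁻¹' X) :=
  fun _ hσ _ hπσ => hX _ hσ _ hπσ.complement

theorem countIn_preimage_complement (X : Set PermSeq) (n : ℕ) :
    countIn (complement ⁻¹' X) n = countIn X n :=
  Set.ncard_preimage_of_injective_subset_range (s := {π ∈ X | π.1 = n})
    complement_involutive.injective (by simp [complement_involutive.surjective.range_eq])

/-- If a closed permutation class `X` contains, for every `k ≥ 1`, the `k`-fold direct sum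
of some up-indecomposable permutation of length `k`, then `|X ∩ S_n| ≥ 2 ^ (n-1)` for all
`n ≥ 1`; analogously for down-indecomposable permutations and skew sums. -/
theorem count_ge_of_nfold_sums :
    (∀ X : Set PermSeq, IsCPC X →
      (∀ k : ℕ, 1 ≤ k → ∃ σ : PermSeq, σ.1 = k ∧ UpIndec σ ∧ nfoldOplus k σ ∈ X) →
      ∀ n : ℕ, 1 ≤ n → 2 ^ (n - 1) ≤ countIn X n) ∧
    (∀ X : Set PermSeq, IsCPC X →
      (∀ k : ℕ, 1 ≤ k → ∃ σ : PermSeq, σ.1 = k ∧ DownIndec σ ∧ nfoldOminus k σ ∈ X) →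
      ∀ n : ℕ, 1 ≤ n → 2 ^ (n - 1) ≤ countIn X n) := by
  refine ⟨fun X hX h n hn => ?_, fun X hX h n hn => ?_⟩
  · obtain ⟨π, rfl, hπ, hπX⟩ := h n hn
    exact two_pow_le_countIn_of_upIndec hX hπ hπX
  · obtain ⟨π, rfl, hπ, hπX⟩ := h n hn
    rw [← countIn_preimage_complement]
    refine two_pow_le_countIn_of_upIndec (π := π.complement) hX.preimage_complement
      hπ.upIndec_complement ?_
    rwa [Set.mem_preimage, complement_nfoldOplus, complement_involutive]
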